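/- arXiv:0907.3771 — 8 statements merged into one kernel-verified Lean document; each statement's English description precedes it below -/
import Mathlib

section
/- Every infinite-dimensional affine subspace v + W of the space of finitely supported functions ℕ → F contains an infinite sequence (v + f_i)_{i ∈ ℕ} such that the support of v is entirely below the support of f_0, and the support of f_i is entirely below the support of f_{i+1} for all i. -/
/-! If every element of `W` vanishing on `{0, …, N}` were zero, restriction to these coordinates
would embed `W` into `F^{N+1}`, so `W` would be finite-dimensional. Hence `W` contains nonzero
vectors supported beyond any bound, and choosing each one beyond the support of the previous one
gives the sequence. -/

namespace Submodule

variable {R : Type*} [Ring R] [IsNoetherianRing R]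

theorem exists_ne_zero_forall_support_gt_of_not_finite {W : Submodule R (ℕ →₀ R)}
    (hW : ¬ Module.Finite R W) (N : ℕ) :
    ∃ f : ℕ →₀ R, f ∈ W ∧ f ≠ 0 ∧ ∀ n ∈ f.support, N < n := by
  by_contra! h
  let restrict : W →ₗ[R] (Fin (N + 1) → R) :=
    LinearMap.pi fun i => (Finsupp.lapply (i : ℕ)).comp W.subtype
  have restrict_injective_iff := injective_iff_map_eq_zero restrict
  refine hW (.of_injective restrict <| restrict_injective_iff.mpr fun f hf => ?_)
  ext1
  by_contra hf0
  obtain ⟨n, hn, hnN⟩ := h f.1 f.2 hf0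
  exact Finsupp.mem_support_iff.mp hn (congrFun hf ⟨n, Nat.lt_succ_of_le hnN⟩)

end Submodule

theorem stmt2 {F : Type*} [Field F] (v : ℕ →₀ F) (W : Submodule F (ℕ →₀ F))
    (hW : ¬ Module.Finite F W) :
    ∃ f : ℕ → (ℕ →₀ F),
      (∀ i, f i ∈ W) ∧ (∀ i, f i ≠ 0) ∧
      (∀ m ∈ v.support, ∀ n ∈ (f 0).support, m < n) ∧
      (∀ i, ∀ m ∈ (f i).support, ∀ n ∈ (f (i + 1)).support, m < n) := by
  choose g hgW hg0 hg_gt using Submodule.exists_ne_zero_forall_support_gt_of_not_finite hW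
  let next : (ℕ →₀ F) → (ℕ →₀ F) := fun x => g (x.support.sup id)
  have lt_next : ∀ x, ∀ m ∈ x.support, ∀ n ∈ (next x).support, m < n :=
    fun x _ hm n hn => (Finset.le_sup (f := id) hm).trans_lt (hg_gt _ n hn)
  let f : ℕ → (ℕ →₀ F) := fun i => Nat.rec (next v) (fun _ prev => next prev) i
  refine ⟨f, fun i => ?_, fun i => ?_, lt_next v, fun i => lt_next (f i)⟩
  · cases i <;> exact hgW _
  · cases i <;> exact hg0 _
end

section
/- Let F be a field with more than 2 elements and let f, g be nonzero finitely supported functions ℕ → F with max(supp f) < min(supp g). If osc denotes the oscillation function, then osc(f+g) ≥ osc(f) + osc(g), with osc(f+g) = osc(f) + osc(g) + 1 when f(max supp f) ≠ g(min supp g), and osc(f+g) = osc(f) + osc(g) when these values are equal. -/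
/-- The oscillation of a finitely supported function `f : ℕ →₀ F`:
the number of indices `i` such that, listing the support of `f` in increasing
order as `x₀ < x₁ < …`, we have `f xᵢ ≠ f xᵢ₊₁`. -/
def osc {F : Type*} [Field F] [DecidableEq F] (f : ℕ →₀ F) : ℕ :=
  let l := f.support.sort (· ≤ ·)
  ((l.zip l.tail).filter (fun p => decide (f p.1 ≠ f p.2))).length

/-!
Since the support of `f` lies to the left of that of `g`, the sorted support of `f + g` is the
sorted support of `f` followed by that of `g`. Its adjacent pairs are those of `f`, those of `g`,
and the one junction pair `(max supp f, min supp g)`, which counts exactly when the values differ.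
-/

namespace List

variable {α β : Type*}

theorem zip_tail_append {l₁ l₂ : List α} (h₁ : l₁ ≠ []) (h₂ : l₂ ≠ []) :
    (l₁ ++ l₂).zip (l₁ ++ l₂).tail =
      l₁.zip l₁.tail ++ (l₁.getLast h₁, l₂.head h₂) :: l₂.zip l₂.tail := by
  induction l₁ with
  | nil => exact absurd rfl h₁
  | cons a t ih =>
    cases t with
    | nil =>
      obtain ⟨b, r, rfl⟩ := exists_cons_of_ne_nil h₂
      simp
    | cons b s =>
      simp only [cons_append, tail_cons] at ih ⊢
      rw [zip_cons_cons, ih (cons_ne_nil b s)]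
      simp [getLast]

def changeCount [DecidableEq β] (v : α → β) (l : List α) : ℕ :=
  ((l.zip l.tail).filter (fun p => decide (v p.1 ≠ v p.2))).length

variable [DecidableEq β]

theorem changeCount_append (v : α → β) {l₁ l₂ : List α} (h₁ : l₁ ≠ []) (h₂ : l₂ ≠ []) :
    changeCount v (l₁ ++ l₂) = changeCount v l₁ + changeCount v l₂ +
      if v (l₁.getLast h₁) ≠ v (l₂.head h₂) then 1 else 0 := by
  unfold changeCount
  rw [zip_tail_append h₁ h₂, filter_append, length_append, filter_cons]
  by_cases h : v (l₁.getLast h₁) = v (l₂.head h₂) <;> simp [h]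
  omega

theorem changeCount_congr {v w : α → β} {l : List α} (h : ∀ x ∈ l, v x = w x) :
    changeCount v l = changeCount w l := by
  unfold changeCount
  congr 1
  refine filter_congr fun p hp => ?_
  obtain ⟨h₁, h₂⟩ := of_mem_zip hp
  rw [h _ h₁, h _ (mem_of_mem_tail h₂)]

end List

theorem Finset.sort_union_of_forall_lt {α : Type*} [LinearOrder α] {s t : Finset α}
    (h : ∀ a ∈ s, ∀ b ∈ t, a < b) : (s ∪ t).sort = s.sort ++ t.sort := by
  have hlt : (s.sort ++ t.sort).SortedLT := List.Pairwise.sortedLT <|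
    List.pairwise_append.2 ⟨(sortedLT_sort s).pairwise, (sortedLT_sort t).pairwise,
      fun a ha b hb => h a ((mem_sort _).1 ha) b ((mem_sort _).1 hb)⟩
  exact (sortedLT_sort _).eq_of_mem_iff hlt fun a => by simp

theorem osc_eq_changeCount {F : Type*} [Field F] [DecidableEq F] (f : ℕ →₀ F) :
    osc f = f.support.sort.changeCount f :=
  rfl

theorem osc_add_of_forall_lt {F : Type*} [Field F] [DecidableEq F] {f g : ℕ →₀ F}
    (hf : f.support.Nonempty) (hg : g.support.Nonempty)
    (hlt : ∀ m ∈ f.support, ∀ n ∈ g.support, m < n) :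
    osc (f + g) = osc f + osc g +
      if f (f.support.max' hf) ≠ g (g.support.min' hg) then 1 else 0 := by
  have hdisj : Disjoint f.support g.support :=
    Finset.disjoint_left.2 fun a ha hag => (hlt a ha a hag).false
  have hf_add : ∀ x ∈ f.support.sort, (f + g) x = f x := fun x hx => by
    rw [Finsupp.add_apply, Finsupp.notMem_support_iff.1
      (Finset.disjoint_left.1 hdisj ((Finset.mem_sort _).1 hx)), add_zero]
  have hg_add : ∀ x ∈ g.support.sort, (f + g) x = g x := fun x hx => by
    rw [Finsupp.add_apply, Finsupp.notMem_support_iff.1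
      (Finset.disjoint_right.1 hdisj ((Finset.mem_sort _).1 hx)), zero_add]
  have hfs : f.support.sort ≠ [] := by simpa [← List.length_pos_iff_ne_nil] using hf
  have hgs : g.support.sort ≠ [] := by simpa [← List.length_pos_iff_ne_nil] using hg
  have hlast : f.support.sort.getLast hfs = f.support.max' hf := by
    rw [List.getLast_eq_getElem]; exact Finset.sorted_last_eq_max'_aux _ _ _
  have hhead : g.support.sort.head hgs = g.support.min' hg := by
    rw [List.head_eq_getElem]; exact Finset.sorted_zero_eq_min'_aux _ _ _
  rw [osc_eq_changeCount, Finsupp.support_add_eq hdisj, Finset.sort_union_of_forall_lt hlt,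
    List.changeCount_append _ hfs hgs, List.changeCount_congr hf_add,
    List.changeCount_congr hg_add, hf_add _ (List.getLast_mem hfs),
    hg_add _ (List.head_mem hgs), hlast, hhead, osc_eq_changeCount, osc_eq_changeCount]

theorem stmt5_general {F : Type*} [Field F] [DecidableEq F]
    (f g : ℕ →₀ F) (hf : f ≠ 0) (hg : g ≠ 0)
    (hlt : ∀ m ∈ f.support, ∀ n ∈ g.support, m < n) :
    osc (f + g) ≥ osc f + osc g ∧
    (f (f.support.max' (Finsupp.support_nonempty_iff.mpr hf)) ≠
        g (g.support.min' (Finsupp.support_nonempty_iff.mpr hg)) →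
      osc (f + g) = osc f + osc g + 1) ∧
    (f (f.support.max' (Finsupp.support_nonempty_iff.mpr hf)) =
        g (g.support.min' (Finsupp.support_nonempty_iff.mpr hg)) →
      osc (f + g) = osc f + osc g) := by
  rw [osc_add_of_forall_lt (Finsupp.support_nonempty_iff.mpr hf)
    (Finsupp.support_nonempty_iff.mpr hg) hlt]
  refine ⟨Nat.le_add_right _ _, fun h => by rw [if_pos h], fun h => by simp [h]⟩

theorem stmt5 {F : Type*} [Field F] [DecidableEq F]
    (hF : ∃ a b c : F, a ≠ b ∧ a ≠ c ∧ b ≠ c)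
    (f g : ℕ →₀ F) (hf : f ≠ 0) (hg : g ≠ 0)
    (hlt : ∀ m ∈ f.support, ∀ n ∈ g.support, m < n) :
    osc (f + g) ≥ osc f + osc g ∧
    (f (f.support.max' (Finsupp.support_nonempty_iff.mpr hf)) ≠
        g (g.support.min' (Finsupp.support_nonempty_iff.mpr hg)) →
      osc (f + g) = osc f + osc g + 1) ∧
    (f (f.support.max' (Finsupp.support_nonempty_iff.mpr hf)) =
        g (g.support.min' (Finsupp.support_nonempty_iff.mpr hg)) →
      osc (f + g) = osc f + osc g) :=
  stmt5_general f g hf hg hlt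
end

section
/- A countable-dimensional vector space V over a field F with |F| > 2 is divisible: there exists a partition of V into two sets P₀, P₁ such that for no affine embedding ε : V → V (injective affine map) is ε(V) contained in P₀ or in P₁. -/
/-!
Identify `V` with `F[X]` and colour a vector by whether its leading coefficient is `1`.
An injective linear map out of an infinite-dimensional space has image of unbounded degree, so
the image of an affine embedding `v ↦ w + ρ v` contains `w + ρ (s • v)` with
`deg ρ v > deg w`; its leading coefficient `s * lc (ρ v)` runs through all of `Fˣ`. Since
`|F| > 2`, this hits both `1` and a value other than `0` and `1`.
-/

open Polynomial Cardinal

theorem exists_ne_ne_of_three {α : Type*} {a b c : α} (hab : a ≠ b) (hac : a ≠ c) (hbc : b ≠ c)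
    (x y : α) : ∃ z, z ≠ x ∧ z ≠ y := by
  by_contra! h
  rcases eq_or_ne a x with rfl | hax
  · exact hbc ((h b hab.symm).trans (h c hac.symm).symm)
  rcases eq_or_ne b x with rfl | hbx
  · exact hac ((h a hax).trans (h c hbc.symm).symm)
  · exact hab ((h a hax).trans (h b hbx).symm)

theorem Module.nonempty_linearEquiv_polynomial_of_rank_eq_aleph0 {F V : Type*} [DivisionRing F]
    [AddCommGroup V] [Module F V] (h : Module.rank F V = ℵ₀) : Nonempty (V ≃ₗ[F] F[X]) :=
  nonempty_linearEquiv_of_lift_rank_eq <| by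
    simpa [h] using (basisMonomials F).mk_eq_rank

namespace Polynomial

variable {F V : Type*} [DivisionRing F] [AddCommGroup V] [Module F V]

theorem exists_degree_lt_of_injective (hV : ¬ Module.Finite F V) {ρ : V →ₗ[F] F[X]}
    (hρ : Function.Injective ρ) (p : F[X]) : ∃ v, p.degree < (ρ v).degree := by
  by_contra! h
  have hrange : ∀ v, ρ v ∈ degreeLT F (p.natDegree + 1) := fun v =>
    mem_degreeLT.2 <| (h v).trans_lt <| degree_le_natDegree.trans_lt <| by
      exact_mod_cast Nat.lt_succ_self _
  exact hV <| Module.Finite.of_injective (ρ.codRestrict _ hrange)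
    fun v w hvw => hρ (congrArg Subtype.val hvw)

theorem exists_leadingCoeff_add_eq (hV : ¬ Module.Finite F V) {ρ : V →ₗ[F] F[X]}
    (hρ : Function.Injective ρ) (w : F[X]) {a : F} (ha : a ≠ 0) :
    ∃ v, (w + ρ v).leadingCoeff = a := by
  obtain ⟨v, hv⟩ := exists_degree_lt_of_injective hV hρ w
  have hlc : (ρ v).leadingCoeff ≠ 0 := by
    rw [Ne, leadingCoeff_eq_zero]
    rintro h
    simp [h] at hv
  have ht : a * (ρ v).leadingCoeff⁻¹ ≠ 0 := mul_ne_zero ha (inv_ne_zero hlc)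
  refine ⟨(a * (ρ v).leadingCoeff⁻¹) • v, ?_⟩
  rw [map_smul, smul_eq_C_mul, leadingCoeff_add_of_degree_lt (by rwa [degree_C_mul ht]),
    leadingCoeff_mul, leadingCoeff_C, inv_mul_cancel_right₀ hlc]

end Polynomial

theorem stmt7 {F V : Type*} [Field F] [AddCommGroup V] [Module F V]
    (hdim : Module.rank F V = Cardinal.aleph0)
    (hF : ∃ a b c : F, a ≠ b ∧ a ≠ c ∧ b ≠ c) :
    ∃ P : Set V, ∀ (w : V) (ρ : V →ₗ[F] V), Function.Injective ρ →
      ¬ (Set.range (fun v => w + ρ v) ⊆ P) ∧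
      ¬ (Set.range (fun v => w + ρ v) ⊆ Pᶜ) := by
  obtain ⟨a, b, c, hab, hac, hbc⟩ := hF
  obtain ⟨t, ht0, ht1⟩ := exists_ne_ne_of_three hab hac hbc (0 : F) 1
  obtain ⟨e⟩ := Module.nonempty_linearEquiv_polynomial_of_rank_eq_aleph0 hdim
  have hV : ¬ Module.Finite F V := by
    rw [← Module.rank_lt_aleph0_iff, hdim]
    exact lt_irrefl _
  refine ⟨{v | (e v).leadingCoeff = 1}, fun w ρ hρ => ?_⟩
  have hlc : ∀ s : F, s ≠ 0 → ∃ v, (e (w + ρ v)).leadingCoeff = s := fun s hs => by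
    simpa using exists_leadingCoeff_add_eq hV (ρ := e.toLinearMap ∘ₗ ρ)
      (e.injective.comp hρ) (e w) hs
  obtain ⟨v₁, hv₁⟩ := hlc 1 one_ne_zero
  obtain ⟨vₜ, hvₜ⟩ := hlc t ht0
  exact ⟨fun hP => ht1 (hvₜ ▸ hP ⟨vₜ, rfl⟩), fun hPc => hPc ⟨v₁, rfl⟩ hv₁⟩
end

section
/- Let V be a vector space of countably infinite dimension over an infinite field F. Then there exists a set A ⊆ V such that A contains no three distinct collinear points (no affine line meets A in more than two points) and the complement V \ A contains no affine line. In particular, V can be partitioned into two sets neither of which contains an affine line. -/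
/-!
Well-order the affine lines so that every line has fewer than `#F` predecessors, which is possible
because `#V ≤ #F`. Going through the lines in this order, choose on each line a point that either
already lies in the set built so far or lies on no line through two of its points. Such a point
exists when the line misses the set: each of the fewer than `#F` secant lines meets it in at most
one point, while it has `#F` points. Every step keeps the set a cap (no three collinear points),
caps are stable under directed unions, and every line receives a point.
-/

open Cardinal Set

universe u v

section AffineLine

variable {F : Type u} {V : Type v} [DivisionRing F] [AddCommGroup V] [Module F V]

variable (F) in
def affineLine (v w : V) : Set V := range fun t : F => v + t • w

theorem self_mem_affineLine (v w : V) : v ∈ affineLine F v w := ⟨0, by simp⟩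

theorem affineLine_eq_of_mem {v w x y : V} (hx : x ∈ affineLine F v w)
    (hy : y ∈ affineLine F v w) (hxy : x ≠ y) : affineLine F v w = affineLine F x (y - x) := by
  obtain ⟨a, rfl⟩ := hx
  obtain ⟨b, rfl⟩ := hy
  have hab : b - a ≠ 0 := sub_ne_zero.2 fun h => hxy (by rw [h])
  have hdir : v + b • w - (v + a • w) = (b - a) • w := by rw [sub_smul]; abel
  ext z
  constructor
  · rintro ⟨t, rfl⟩
    refine ⟨(t - a) / (b - a), ?_⟩
    dsimp only
    rw [hdir, smul_smul, div_mul_cancel₀ _ hab, sub_smul]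
    abel
  · rintro ⟨s, rfl⟩
    refine ⟨a + s * (b - a), ?_⟩
    dsimp only
    rw [hdir, smul_smul, add_smul]
    abel

theorem lift_mk_affineLine {v w : V} (hw : w ≠ 0) :
    lift.{u} #(affineLine F v w) = lift.{v} #F :=
  mk_range_eq_of_injective ((add_right_injective v).comp (smul_left_injective F hw))

theorem subsingleton_affineLine_inter_of_notMem {v w p u : V} (hp : p ∉ affineLine F v w) :
    (affineLine F v w ∩ affineLine F p u).Subsingleton := by
  rintro x ⟨hxL, hxM⟩ y ⟨hyL, hyM⟩
  by_contra hxy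
  apply hp
  rw [affineLine_eq_of_mem hxL hyL hxy, ← affineLine_eq_of_mem hxM hyM hxy]
  exact self_mem_affineLine p u

end AffineLine

section Caps

variable {F : Type u} {V : Type v} [DivisionRing F] [AddCommGroup V] [Module F V]

variable (F) in
def IsCap (A : Set V) : Prop :=
  ∀ v w : V, w ≠ 0 → ∀ x ∈ A ∩ affineLine F v w, ∀ y ∈ A ∩ affineLine F v w,
    ∀ z ∈ A ∩ affineLine F v w, x = y ∨ x = z ∨ y = z

variable (F) in
/-- Contains `P` itself: for `p = q` the term is `affineLine F p 0 = {p}`. -/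
def secantPoints (P : Set V) : Set V := ⋃ pq : P × P, affineLine F pq.1 (pq.2 - pq.1)

theorem mem_secantPoints {P : Set V} {p q : V} (hp : p ∈ P) (hq : q ∈ P) {z : V}
    (hz : z ∈ affineLine F p (q - p)) : z ∈ secantPoints F P :=
  mem_iUnion.2 ⟨(⟨p, hp⟩, ⟨q, hq⟩), hz⟩

theorem mk_affineLine_inter_secantPoints_le {P : Set V} {v w : V}
    (hP : ∀ p ∈ P, p ∉ affineLine F v w) :
    #(affineLine F v w ∩ secantPoints F P : Set V) ≤ #P * #P := by
  rw [secantPoints, inter_iUnion]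
  refine (mk_iUnion_le _).trans ?_
  rw [mk_prod, lift_id]
  refine mul_le_of_le_one_right' (ciSup_le' fun pq => ?_)
  exact mk_le_one_iff_set_subsingleton.2 (subsingleton_affineLine_inter_of_notMem (hP _ pq.1.2))

theorem exists_mem_affineLine_and_mem_or_notMem_secantPoints [Infinite F] {P : Set V}
    (hP : lift.{u} #P < lift.{v} #F) {v w : V} (hw : w ≠ 0) :
    ∃ z ∈ affineLine F v w, z ∈ P ∨ z ∉ secantPoints F P := by
  by_cases hmeet : ∃ z ∈ affineLine F v w, z ∈ P
  · obtain ⟨z, hzL, hzP⟩ := hmeet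
    exact ⟨z, hzL, .inl hzP⟩
  push Not at hmeet
  by_contra! hcover
  have hsub : affineLine F v w ⊆ affineLine F v w ∩ secantPoints F P :=
    fun z hz => ⟨hz, (hcover z hz).2⟩
  have hle := lift_le.{u}.2 ((mk_le_mk_of_subset hsub).trans
    (mk_affineLine_inter_secantPoints_le fun p hp hpL => hmeet p hpL hp))
  rw [lift_mk_affineLine hw, lift_mul] at hle
  exact hle.not_gt (mul_lt_of_lt (aleph0_le_lift.2 (aleph0_le_mk F)) hP hP)

theorem Set.Subsingleton.eq_or_eq_or_eq_of_mem_insert {α : Type*} {s : Set α} (hs : s.Subsingleton)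
    {a x y z : α} (hx : x ∈ insert a s) (hy : y ∈ insert a s) (hz : z ∈ insert a s) :
    x = y ∨ x = z ∨ y = z := by
  rcases hx with rfl | hx <;> rcases hy with rfl | hy <;> rcases hz with rfl | hz <;>
    grind [Set.Subsingleton]

theorem IsCap.insert {P : Set V} (hP : IsCap F P) {a : V} (ha : a ∉ secantPoints F P) :
    IsCap F (insert a P) := by
  intro v w hw
  by_cases haL : a ∈ affineLine F v w
  · have hsub : (P ∩ affineLine F v w).Subsingleton := by
      rintro p ⟨hp, hpL⟩ q ⟨hq, hqL⟩
      by_contra hpq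
      exact ha (mem_secantPoints hp hq (affineLine_eq_of_mem hpL hqL hpq ▸ haL))
    rw [insert_inter_of_mem haL]
    intro x hx y hy z hz
    exact hsub.eq_or_eq_or_eq_of_mem_insert hx hy hz
  · rw [insert_inter_of_notMem haL]
    exact hP v w hw

theorem isCap_iUnion {ι : Type*} {A : ι → Set V} (hdir : Directed (· ⊆ ·) A)
    (hA : ∀ i, IsCap F (A i)) : IsCap F (⋃ i, A i) := by
  rintro v w hw x ⟨hx, hxL⟩ y ⟨hy, hyL⟩ z ⟨hz, hzL⟩
  obtain ⟨i, hxi⟩ := mem_iUnion.1 hx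
  obtain ⟨j, hyj⟩ := mem_iUnion.1 hy
  obtain ⟨k, hzk⟩ := mem_iUnion.1 hz
  obtain ⟨m, him, hjm⟩ := hdir i j
  obtain ⟨n, hmn, hkn⟩ := hdir m k
  exact hA n v w hw x ⟨hmn (him hxi), hxL⟩ y ⟨hmn (hjm hyj), hyL⟩ z ⟨hkn hzk, hzL⟩

end Caps

section Greedy

variable {F : Type u} {V : Type v} [DivisionRing F] [AddCommGroup V] [Module F V]

variable (F) in
noncomputable def nextPoint (P : Set V) (v w : V) : V :=
  Classical.epsilon fun z => z ∈ affineLine F v w ∧ (z ∈ P ∨ z ∉ secantPoints F P)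

theorem nextPoint_spec [Infinite F] {P : Set V} (hP : lift.{u} #P < lift.{v} #F) {v w : V}
    (hw : w ≠ 0) : nextPoint F P v w ∈ affineLine F v w ∧
      (nextPoint F P v w ∈ P ∨ nextPoint F P v w ∉ secantPoints F P) :=
  Classical.epsilon_spec (p := fun z => z ∈ affineLine F v w ∧ (z ∈ P ∨ z ∉ secantPoints F P))
    (by simpa only [exists_prop] using exists_mem_affineLine_and_mem_or_notMem_secantPoints hP hw)

theorem monotone_image_Iic {ι α : Type*} [Preorder ι] (g : ι → α) :
    Monotone fun i => g '' Iic i :=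
  fun _ _ hij => image_mono (Iic_subset_Iic.2 hij)

variable {ι : Type v} [LinearOrder ι] [WellFoundedLT ι]

variable (F) in
noncomputable def greedyPoints (v w : ι → V) : ι → V :=
  wellFounded_lt.fix fun i g => nextPoint F (range fun j : Iio i => g j j.2) (v i) (w i)

theorem greedyPoints_eq (v w : ι → V) (i : ι) :
    greedyPoints F v w i = nextPoint F (greedyPoints F v w '' Iio i) (v i) (w i) := by
  rw [greedyPoints, wellFounded_lt.fix_eq, image_eq_range]

variable [Infinite F] {v w : ι → V}

theorem greedyPoints_spec (hw : ∀ i, w i ≠ 0) (hsmall : ∀ i : ι, lift.{u} #(Iio i) < lift.{v} #F)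
    (i : ι) : greedyPoints F v w i ∈ affineLine F (v i) (w i) ∧
      (greedyPoints F v w i ∈ greedyPoints F v w '' Iio i ∨
        greedyPoints F v w i ∉ secantPoints F (greedyPoints F v w '' Iio i)) := by
  rw [greedyPoints_eq]
  exact nextPoint_spec ((lift_le.2 mk_image_le).trans_lt (hsmall i)) (hw i)

theorem isCap_greedyPoints_image_Iic (hw : ∀ i, w i ≠ 0)
    (hsmall : ∀ i : ι, lift.{u} #(Iio i) < lift.{v} #F) (i : ι) :
    IsCap F (greedyPoints F v w '' Iic i) := by
  induction i using WellFoundedLT.induction with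
  | _ i ih =>
    set g := greedyPoints F v w
    have hIio : g '' Iio i = ⋃ j : Iio i, g '' Iic j := by
      refine subset_antisymm ?_ (iUnion_subset fun j => image_mono (Iic_subset_Iio.2 j.2))
      rintro _ ⟨j, hj, rfl⟩
      exact mem_iUnion.2 ⟨⟨j, hj⟩, mem_image_of_mem g self_mem_Iic⟩
    have hcap : IsCap F (g '' Iio i) := hIio ▸ isCap_iUnion
      ((monotone_image_Iic g).comp (Subtype.mono_coe _)).directed_le fun j => ih j j.2
    rw [← Iio_insert, image_insert_eq]
    rcases (greedyPoints_spec hw hsmall i).2 with hmem | hnew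
    · rwa [insert_eq_of_mem hmem]
    · exact hcap.insert hnew

theorem isCap_range_greedyPoints (hw : ∀ i, w i ≠ 0)
    (hsmall : ∀ i : ι, lift.{u} #(Iio i) < lift.{v} #F) : IsCap F (range (greedyPoints F v w)) := by
  have hrange : range (greedyPoints F v w) = ⋃ i, greedyPoints F v w '' Iic i :=
    subset_antisymm (range_subset_iff.2 fun i => mem_iUnion.2 ⟨i, mem_image_of_mem _ self_mem_Iic⟩)
      (iUnion_subset fun i => image_subset_range _ _)
  rw [hrange]
  exact isCap_iUnion (monotone_image_Iic _).directed_le (isCap_greedyPoints_image_Iic hw hsmall)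

end Greedy

section Existence

variable {F : Type u} {V : Type v} [DivisionRing F] [AddCommGroup V] [Module F V] [Infinite F]

theorem lift_mk_le_lift_mk_of_rank_le_aleph0 (h : Module.rank F V ≤ ℵ₀) :
    lift.{u} #V ≤ lift.{v} #F := by
  by_contra! hlt
  have hV : #V ≤ ℵ₀ := Module.Free.rank_eq_mk_of_infinite_lt F V hlt ▸ h
  exact hlt.not_ge ((lift_le_aleph0.2 hV).trans (aleph0_le_lift.2 (aleph0_le_mk F)))

theorem exists_isCap_forall_inter_affineLine_nonempty (hV : lift.{u} #V ≤ lift.{v} #F) :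
    ∃ A : Set V, IsCap F A ∧ ∀ v w : V, w ≠ 0 → (A ∩ affineLine F v w).Nonempty := by
  let Lines := {p : V × V // p.2 ≠ 0}
  obtain ⟨e⟩ : Nonempty ((#Lines).ord.ToType ≃ Lines) := Cardinal.eq.1 (mk_ord_toType _)
  have hsmall (i : (#Lines).ord.ToType) : lift.{u} #(Iio i) < lift.{v} #F := calc
    lift.{u} #(Iio i) < lift.{u} #Lines := lift_lt.2 ((mk_Iio_lt i (by simp)).trans_eq (by simp))
    _ ≤ lift.{u} #(V × V) := lift_le.2 (mk_subtype_le _)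
    _ ≤ lift.{v} #F * lift.{v} #F := by rw [mk_prod, lift_id, lift_mul]; exact mul_le_mul' hV hV
    _ = lift.{v} #F := mul_eq_self (aleph0_le_lift.2 (aleph0_le_mk F))
  let g := greedyPoints F (fun i => (e i).1.1) (fun i => (e i).1.2)
  refine ⟨range g, isCap_range_greedyPoints (fun i => (e i).2) hsmall, fun v w hw => ?_⟩
  obtain ⟨i, hi⟩ := e.surjective ⟨(v, w), hw⟩
  have hgi := (greedyPoints_spec (v := fun i => (e i).1.1) (fun i => (e i).2) hsmall i).1
  rw [hi] at hgi
  exact ⟨g i, mem_range_self i, hgi⟩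

end Existence

theorem stmt8 {F V : Type*} [Field F] [Infinite F] [AddCommGroup V] [Module F V]
    (hdim : Module.rank F V = Cardinal.aleph0) :
    ∃ A : Set V,
      (∀ (v w : V), w ≠ 0 → ∀ x ∈ A, ∀ y ∈ A, ∀ z ∈ A,
        x ∈ Set.range (fun t : F => v + t • w) →
        y ∈ Set.range (fun t : F => v + t • w) →
        z ∈ Set.range (fun t : F => v + t • w) →
        x = y ∨ x = z ∨ y = z) ∧
      (∀ (v w : V), w ≠ 0 → ¬ (Set.range (fun t : F => v + t • w) ⊆ Aᶜ)) := by
  obtain ⟨A, hcap, hmeet⟩ := exists_isCap_forall_inter_affineLine_nonempty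
    (lift_mk_le_lift_mk_of_rank_le_aleph0 (F := F) (V := V) hdim.le)
  refine ⟨A, fun v w hw x hx y hy z hz hxL hyL hzL => ?_, fun v w hw hsub => ?_⟩
  · exact hcap v w hw x ⟨hx, hxL⟩ y ⟨hy, hyL⟩ z ⟨hz, hzL⟩
  · obtain ⟨x, hxA, hxL⟩ := hmeet v w hw
    exact hsub hxL hxA
end

section
/- Let V and V' be vector spaces over ℚ. An injective map α : V → V' preserves the midpoint relation μ (i.e., for all x,y,z, 2y = x + z iff 2·α(y) = α(x) + α(z)) if and only if α is an affine embedding. -/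
/-!
A midpoint-preserving map `α` satisfies Jensen's equation `α (x + z) + α 0 = α x + α z`, because
`x + z` and `0` have the same midpoint as `x` and `z`. Hence `α - α 0` is additive, and additive
maps between `ℚ`-vector spaces are `ℚ`-linear. Conversely, an injective linear part both
preserves and reflects the relation `2 • y = x + z`, and translation does not affect it.
-/

section Midpoint

variable {k V W : Type*} [Ring k] [AddCommGroup V] [Module k V] [AddCommGroup W] [Module k W]

theorem map_add_add_map_zero_of_two_smul_eq_add [Invertible (2 : k)] {α : V → W}
    (h : ∀ x y z : V, (2 : k) • y = x + z → (2 : k) • α y = α x + α z) (x z : V) :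
    α (x + z) + α 0 = α x + α z := by
  have hm : (2 : k) • (⅟2 : k) • (x + z) = x + z := by rw [smul_smul, mul_invOf_self, one_smul]
  rw [← h _ _ _ hm, h _ _ _ (hm.trans (add_zero _).symm)]

theorem affine_two_smul_eq_add_iff {β : V →ₗ[k] W} (hβ : Function.Injective β) (w : W)
    (x y z : V) :
    (2 : k) • (w + β y) = (w + β x) + (w + β z) ↔ (2 : k) • y = x + z := by
  rw [smul_add, show (w + β x) + (w + β z) = (2 : k) • w + (β x + β z) by rw [two_smul]; abel,
    add_right_inj, ← map_smul, ← map_add, hβ.eq_iff]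

end Midpoint

theorem exists_linearMap_of_two_smul_eq_add {V W : Type*} [AddCommGroup V] [Module ℚ V]
    [AddCommGroup W] [Module ℚ W] {α : V → W}
    (h : ∀ x y z : V, (2 : ℚ) • y = x + z → (2 : ℚ) • α y = α x + α z) :
    ∃ β : V →ₗ[ℚ] W, ∀ v, β v = α v - α 0 := by
  let f : V →+ W := AddMonoidHom.mk' (fun v => α v - α 0) fun x z => by
    have := map_add_add_map_zero_of_two_smul_eq_add h x z
    linear_combination (norm := abel_nf) this
  exact ⟨f.toRatLinearMap, fun _ => rfl⟩

theorem stmt11 {V V' : Type*} [AddCommGroup V] [Module ℚ V]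
    [AddCommGroup V'] [Module ℚ V'] (α : V → V') (hinj : Function.Injective α) :
    (∀ x y z : V, (2 : ℚ) • y = x + z ↔ (2 : ℚ) • α y = α x + α z) ↔
      ∃ (w : V') (β : V →ₗ[ℚ] V'), Function.Injective β ∧ ∀ v : V, α v = w + β v := by
  constructor
  · intro h
    obtain ⟨β, hβ⟩ := exists_linearMap_of_two_smul_eq_add fun x y z => (h x y z).mp
    refine ⟨α 0, β, fun a b hab => hinj ?_, fun v => by rw [hβ, add_sub_cancel]⟩
    rwa [hβ, hβ, sub_left_inj] at hab
  · rintro ⟨w, β, hβ, hαβ⟩ x y z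
    simp only [hαβ, affine_two_smul_eq_add_iff hβ]
end

section
/- Let G be a torsion-free abelian group and F ⊆ G a finite subset. Then there exists a map f : F → ℕ such that for all x, y, z ∈ F, 2y = x + z (in G) if and only if 2·f(y) = f(x) + f(z) (in ℕ). -/
/-!
The span of `F` is a finitely generated torsion-free abelian group, hence free. The finitely many
nonzero differences `2y - x - z` (for `x, y, z ∈ F`) can all be kept nonzero by a single linear
form to `ℤ`: in a basis, `∑ tⁱ bᵢ*` sends `v` to the polynomial with coefficients the coordinates
of `v`, evaluated at `t`, so any `t` outside the roots of the product of these polynomials works.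
Translating the values of that form into `ℕ` does not affect the midpoint relation.
-/

open Polynomial

theorem Module.Free.exists_dual_forall_apply_ne_zero {R M : Type*} [CommRing R] [IsDomain R]
    [Infinite R] [AddCommGroup M] [Module R M] [Module.Free R M] [Module.Finite R M]
    (S : Finset M) (hS : 0 ∉ S) : ∃ φ : Module.Dual R M, ∀ s ∈ S, φ s ≠ 0 := by
  let b := Module.finBasis R M
  let p : M → R[X] := fun s => ∑ i : Fin (Module.finrank R M), monomial i (b.repr s i)
  have hp : ∀ s ∈ S, p s ≠ 0 := by
    intro s hs hps
    obtain ⟨i, hi⟩ := Finsupp.ne_iff.mp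
      ((b.repr.map_ne_zero_iff).mpr (ne_of_mem_of_not_mem hs hS))
    apply hi
    simpa [p, finsetSum_coeff, coeff_monomial, Fin.val_inj] using congrArg (coeff · i) hps
  obtain ⟨t, ht⟩ : ∃ t, (∏ s ∈ S, p s).eval t ≠ 0 := by
    by_contra! h
    exact Finset.prod_ne_zero_iff.mpr hp (Polynomial.funext (by simpa using h))
  refine ⟨∑ i : Fin (Module.finrank R M), t ^ (i : ℕ) • b.coord i, fun s hs => ?_⟩
  rw [eval_prod, Finset.prod_ne_zero_iff] at ht
  simpa [p, eval_finsetSum, mul_comm] using ht s hs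

theorem exists_int_midpoint_iff {G : Type*} [AddCommGroup G] [Module.IsTorsionFree ℤ G]
    (F : Finset G) : ∃ ψ : G → ℤ, ∀ x ∈ F, ∀ y ∈ F, ∀ z ∈ F,
      (y + y = x + z ↔ ψ y + ψ y = ψ x + ψ z) := by
  classical
  let M := Submodule.span ℤ (F : Set G)
  have : Module.Finite ℤ M := Module.Finite.span_of_finite ℤ F.finite_toSet
  let ι : F → M := fun x => ⟨x, Submodule.subset_span x.2⟩
  let δ : F × F × F → M := fun ⟨x, y, z⟩ => ι y + ι y - ι x - ι z
  obtain ⟨φ, hφ⟩ := Module.Free.exists_dual_forall_apply_ne_zero (R := ℤ)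
    ((Finset.univ.image δ).erase 0) (Finset.notMem_erase 0 _)
  refine ⟨fun g => if h : g ∈ F then φ (ι ⟨g, h⟩) else 0, fun x hx y hy z hz => ?_⟩
  have hmid : y + y = x + z ↔ δ ⟨⟨x, hx⟩, ⟨y, hy⟩, ⟨z, hz⟩⟩ = 0 := by
    simp [δ, ι, Subtype.ext_iff, sub_sub, sub_eq_zero]
  have hφ_iff : δ ⟨⟨x, hx⟩, ⟨y, hy⟩, ⟨z, hz⟩⟩ = 0 ↔ φ (δ ⟨⟨x, hx⟩, ⟨y, hy⟩, ⟨z, hz⟩⟩) = 0 := by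
    refine ⟨fun h => by rw [h, map_zero], fun h => ?_⟩
    by_contra hne
    exact hφ _ (Finset.mem_erase.mpr ⟨hne, Finset.mem_image_of_mem _ (Finset.mem_univ _)⟩) h
  simp only [hmid, hφ_iff, dif_pos hx, dif_pos hy, dif_pos hz]
  simp only [δ, map_sub, map_add]
  omega

theorem exists_nat_eq_add_const {α : Type*} (F : Finset α) (ψ : α → ℤ) :
    ∃ (f : α → ℕ) (c : ℤ), ∀ x ∈ F, (f x : ℤ) = ψ x + c := by
  refine ⟨fun x => (ψ x + ∑ y ∈ F, |ψ y|).toNat, ∑ y ∈ F, |ψ y|, fun x hx => ?_⟩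
  have : |ψ x| ≤ ∑ y ∈ F, |ψ y| := Finset.single_le_sum (fun y _ => abs_nonneg (ψ y)) hx
  exact Int.toNat_of_nonneg (by linarith [neg_abs_le (ψ x)])

theorem stmt12 {G : Type*} [AddCommGroup G] [NoZeroSMulDivisors ℤ G]
    (F : Finset G) :
    ∃ f : G → ℕ, ∀ x ∈ F, ∀ y ∈ F, ∀ z ∈ F,
      (y + y = x + z ↔ f y + f y = f x + f z) := by
  obtain ⟨ψ, hψ⟩ := exists_int_midpoint_iff F
  obtain ⟨f, c, hf⟩ := exists_nat_eq_add_const F ψ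
  refine ⟨f, fun x hx y hy z hz => ?_⟩
  rw [hψ x hx y hy z hz]
  have := hf x hx; have := hf y hy; have := hf z hz
  omega
end

section
/- Let R be a countable set with a ternary relation μ' such that every finite subset of (R, μ') embeds into the midpoint structure of a ℚ-vector space V (preserving and reflecting the relation). Let V' = ℚ^[R] be the free ℚ-vector space on R with canonical basis δ, and let W ⊆ V' be the subspace spanned by {δ(x) + δ(z) − 2δ(y) : (x,y,z) ∈ μ'}. Then the composite map ρ' : R → V'/W of δ with the quotient map is injective and satisfies: (x,y,z) ∈ μ' if and only if 2·ρ'(y) = ρ'(x) + ρ'(z) in V'/W. -/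
/-!
A vector of `midSpan μ'` is a finite combination of generators, so it involves only finitely many
triples of `μ'`. Extending an embedding `f` of a large enough finite subset linearly to `R →₀ ℚ`
therefore kills that vector, while `f` still reflects `μ'` and is injective on any prescribed
finite set. Applied to `δ r - δ s` and to `δ x + δ z - 2 δ y`, this gives injectivity and the
reflection of the midpoint relation; its preservation holds because the generators lie in
`midSpan μ'`.
-/

/-- The subspace of the free `ℚ`-vector space on `R` spanned by the vectors
`δ x + δ z - 2 δ y` for `(x, y, z)` in the ternary relation `μ'`. -/
noncomputable def midSpan {R : Type*} (μ' : R → R → R → Prop) : Submodule ℚ (R →₀ ℚ) :=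
  Submodule.span ℚ
    {v : R →₀ ℚ | ∃ x y z : R, μ' x y z ∧
      v = Finsupp.single x 1 + Finsupp.single z 1 - (2 : ℚ) • Finsupp.single y 1}

section Midpoints

variable {R V : Type*} [AddCommGroup V] [Module ℚ V] (μ' : R → R → R → Prop)

def PreservesMidpointsOn (f : R → V) (F : Set R) : Prop :=
  ∀ x ∈ F, ∀ y ∈ F, ∀ z ∈ F, μ' x y z → (2 : ℚ) • f y = f x + f z

variable {μ'}

theorem PreservesMidpointsOn.mono {f : R → V} {F G : Set R} (hf : PreservesMidpointsOn μ' f G)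
    (hFG : F ⊆ G) : PreservesMidpointsOn μ' f F :=
  fun x hx y hy z hz => hf x (hFG hx) y (hFG hy) z (hFG hz)

theorem exists_finset_linearCombination_eq_zero_of_mem_midSpan {v : R →₀ ℚ}
    (hv : v ∈ midSpan μ') :
    ∃ F : Finset R, ∀ f : R → V, PreservesMidpointsOn μ' f F →
      Finsupp.linearCombination ℚ f v = 0 := by
  classical
  induction hv using Submodule.span_induction with
  | mem v hv =>
    obtain ⟨x, y, z, hxyz, rfl⟩ := hv
    refine ⟨{x, y, z}, fun f hf => ?_⟩
    have hmid := hf x (by simp) y (by simp) z (by simp) hxyz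
    simp only [map_sub, map_add, map_smul, Finsupp.linearCombination_single, one_smul]
    rw [sub_eq_zero, hmid]
  | zero => exact ⟨∅, fun f _ => map_zero _⟩
  | add v w _ _ ihv ihw =>
    obtain ⟨F, hF⟩ := ihv
    obtain ⟨G, hG⟩ := ihw
    refine ⟨F ∪ G, fun f hf => ?_⟩
    rw [map_add, hF f (hf.mono (by simp)), hG f (hf.mono (by simp)), add_zero]
  | smul a v _ ih =>
    obtain ⟨F, hF⟩ := ih
    exact ⟨F, fun f hf => by rw [map_smul, hF f hf, smul_zero]⟩

theorem exists_embedding_linearCombination_eq_zero_of_mem_midSpan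
    (hage : ∀ F : Finset R, ∃ f : R → V, Set.InjOn f ↑F ∧
      ∀ x ∈ F, ∀ y ∈ F, ∀ z ∈ F, (μ' x y z ↔ (2 : ℚ) • f y = f x + f z))
    {v : R →₀ ℚ} (hv : v ∈ midSpan μ') (G : Finset R) :
    ∃ f : R → V, Set.InjOn f ↑G ∧
      (∀ x ∈ G, ∀ y ∈ G, ∀ z ∈ G, (μ' x y z ↔ (2 : ℚ) • f y = f x + f z)) ∧
      Finsupp.linearCombination ℚ f v = 0 := by
  classical
  obtain ⟨F, hF⟩ := exists_finset_linearCombination_eq_zero_of_mem_midSpan (V := V) hv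
  obtain ⟨f, hinj, hf⟩ := hage (G ∪ F)
  have hG : ∀ {x}, x ∈ G → x ∈ G ∪ F := Finset.mem_union_left F
  have hF' : ∀ {x}, x ∈ F → x ∈ G ∪ F := Finset.mem_union_right G
  exact ⟨f, hinj.mono (by simp), fun x hx y hy z hz => hf x (hG hx) y (hG hy) z (hG hz),
    hF f fun x hx y hy z hz => (hf x (hF' hx) y (hF' hy) z (hF' hz)).mp⟩

theorem midSpan_mk_two_smul_eq_add_iff (x y z : R) :
    (2 : ℚ) • (Submodule.Quotient.mk (Finsupp.single y 1) : (R →₀ ℚ) ⧸ midSpan μ') =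
        Submodule.Quotient.mk (Finsupp.single x 1) + Submodule.Quotient.mk (Finsupp.single z 1) ↔
      Finsupp.single x 1 + Finsupp.single z 1 - (2 : ℚ) • Finsupp.single y 1 ∈ midSpan μ' := by
  rw [← Submodule.Quotient.mk_smul, ← Submodule.Quotient.mk_add, eq_comm, Submodule.Quotient.eq]

end Midpoints

theorem stmt18_general {R : Type*} (μ' : R → R → R → Prop)
    {V : Type*} [AddCommGroup V] [Module ℚ V]
    (hage : ∀ F : Finset R, ∃ f : R → V, Set.InjOn f ↑F ∧
      ∀ x ∈ F, ∀ y ∈ F, ∀ z ∈ F, (μ' x y z ↔ (2 : ℚ) • f y = f x + f z)) :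
    Function.Injective
        (fun r : R =>
          (Submodule.Quotient.mk (Finsupp.single r 1) : (R →₀ ℚ) ⧸ midSpan μ')) ∧
      ∀ x y z : R,
        (μ' x y z ↔
          (2 : ℚ) • (Submodule.Quotient.mk (Finsupp.single y 1) : (R →₀ ℚ) ⧸ midSpan μ') =
            Submodule.Quotient.mk (Finsupp.single x 1) +
              Submodule.Quotient.mk (Finsupp.single z 1)) := by
  classical
  refine ⟨fun r s hrs => ?_, fun x y z => ?_⟩
  · obtain ⟨f, hinj, -, hf⟩ := exists_embedding_linearCombination_eq_zero_of_mem_midSpan hage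
      ((Submodule.Quotient.eq _).mp hrs) {r, s}
    simp only [map_sub, Finsupp.linearCombination_single, one_smul, sub_eq_zero] at hf
    exact hinj (by simp) (by simp) hf
  rw [midSpan_mk_two_smul_eq_add_iff]
  refine ⟨fun h => Submodule.subset_span ⟨x, y, z, h, rfl⟩, fun hmem => ?_⟩
  obtain ⟨f, -, hμ, hf⟩ := exists_embedding_linearCombination_eq_zero_of_mem_midSpan hage hmem
    {x, y, z}
  simp only [map_sub, map_add, map_smul, Finsupp.linearCombination_single, one_smul,
    sub_eq_zero] at hf
  exact (hμ x (by simp) y (by simp) z (by simp)).mpr hf.symm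

theorem stmt18 {R : Type*} [Countable R] (μ' : R → R → R → Prop)
    {V : Type*} [AddCommGroup V] [Module ℚ V]
    (hage : ∀ F : Finset R, ∃ f : R → V, Set.InjOn f ↑F ∧
      ∀ x ∈ F, ∀ y ∈ F, ∀ z ∈ F, (μ' x y z ↔ (2 : ℚ) • f y = f x + f z)) :
    Function.Injective
        (fun r : R =>
          (Submodule.Quotient.mk (Finsupp.single r 1) : (R →₀ ℚ) ⧸ midSpan μ')) ∧
      ∀ x y z : R,
        (μ' x y z ↔
          (2 : ℚ) • (Submodule.Quotient.mk (Finsupp.single y 1) : (R →₀ ℚ) ⧸ midSpan μ') =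
            Submodule.Quotient.mk (Finsupp.single x 1) +
              Submodule.Quotient.mk (Finsupp.single z 1)) :=
  stmt18_general μ' hage
end

section
/- Let F_q be a finite field, let k ∈ ℕ, let W be a subspace of F_q^[ω] of dimension at least k+1, and let v ∈ F_q^[ω] with max(supp v) < min(supp W). Suppose Δ : F_q^[ω] → {red, blue} is a coloring such that Δ(v) = blue, the affine space v + W contains no red affine subspace of dimension k, and Δ is end-determined on v + W (for each nonzero a ∈ F_q, all f ∈ v + W with f(max supp f) = a receive the same color). Then every element of v + W is colored blue. -/
/-!
If some `v + w` were red, let `a ≠ 0` be its last nonzero coefficient; since `supp v` lies below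
`supp W`, this is also the last coefficient of `w`. Inside a `(k+1)`-dimensional `V ≤ W`, let `d`
be the largest index at which some vector of `V` is nonzero. The vectors of `V` whose `d`-th
coefficient equals `a` form a `k`-dimensional affine subspace (a coset of the kernel of evaluation
at `d`), and each `v + x` with `x` in it ends in the coefficient `a` at `d`. By end-determinedness
that whole affine subspace has the colour of `v + w`, i.e. it is red, which is excluded.
-/

namespace Finsupp

theorem finite_setOf_exists_apply_ne_zero_of_fg {α M R : Type*} [Semiring R] [AddCommMonoid M]
    [Module R M] {V : Submodule R (α →₀ M)} (hV : V.FG) :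
    {n | ∃ x ∈ V, x n ≠ 0}.Finite := by
  obtain ⟨s, rfl⟩ := hV
  refine (s.finite_toSet.biUnion fun g _ => g.support.finite_toSet).subset ?_
  rintro n ⟨x, hx, hxn⟩
  exact (mem_supported R x).mp (span_le_supported_biUnion_support R (s : Set (α →₀ M)) hx)
    (mem_support_iff.mpr hxn)

variable {α M : Type*} [LinearOrder α]

theorem max'_support_eq [Zero M] {g : α →₀ M} {d : α} (hd : g d ≠ 0)
    (h : ∀ n, d < n → g n = 0) (hne : g.support.Nonempty) : g.support.max' hne = d :=
  le_antisymm
    (Finset.max'_le _ _ _ fun n hn => not_lt.mp fun hlt => mem_support_iff.mp hn (h n hlt))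
    (Finset.le_max' _ _ (mem_support_iff.mpr hd))

theorem apply_eq_zero_of_max'_support_lt [Zero M] {g : α →₀ M} {hne : g.support.Nonempty}
    {n : α} (hn : g.support.max' hne < n) : g n = 0 :=
  notMem_support_iff.mp fun h => (g.support.le_max' n h).not_gt hn

theorem exists_add_ne_zero_apply_max'_support [AddZeroClass M] {v x : α →₀ M} {d : α}
    (hv : ∀ n, d ≤ n → v n = 0) (hxd : x d ≠ 0) (hx : ∀ n, d < n → x n = 0) :
    ∃ h : v + x ≠ 0, (v + x) ((v + x).support.max' (support_nonempty_iff.mpr h)) = x d := by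
  have hd : (v + x) d = x d := by simp [hv d le_rfl]
  have hne : v + x ≠ 0 := fun h => hxd (by rw [← hd, h, coe_zero, Pi.zero_apply])
  refine ⟨hne, ?_⟩
  rw [max'_support_eq (hd ▸ hxd) fun n hn => by simp [hv n hn.le, hx n hn], hd]

theorem exists_apply_ne_zero_forall_lt_apply_eq_zero_of_fg {R : Type*} [Semiring R]
    [AddCommMonoid M] [Module R M] {V : Submodule R (α →₀ M)} (hV : V.FG) (hV0 : V ≠ ⊥) :
    ∃ d, ∃ e ∈ V, e d ≠ 0 ∧ ∀ x ∈ V, ∀ n, d < n → x n = 0 := by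
  obtain ⟨e, he, he0⟩ := Submodule.exists_mem_ne_zero_of_ne_bot hV0
  obtain ⟨n, hn⟩ := support_nonempty_iff.mpr he0
  obtain ⟨d, ⟨e', he', hd⟩, hmax⟩ := Set.exists_max_image _ id
    (finite_setOf_exists_apply_ne_zero_of_fg hV) ⟨n, e, he, mem_support_iff.mp hn⟩
  exact ⟨d, e', he', hd, fun x hx n hn => not_not.mp fun hxn => (hmax n ⟨x, hx, hxn⟩).not_gt hn⟩

end Finsupp

namespace Submodule

theorem exists_le_finrank_eq {K V : Type*} [DivisionRing K] [AddCommGroup V] [Module K V]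
    (W : Submodule K V) {n : ℕ} (h : n ≤ Module.rank K W) :
    ∃ U ≤ W, Module.finrank K U = n := by
  obtain ⟨f, hf⟩ := exists_linearIndependent_of_le_rank h
  refine ⟨span K (Set.range (W.subtype ∘ f)),
    span_le.mpr (Set.range_subset_iff.mpr fun i => (f i).2), ?_⟩
  rw [finrank_span_eq_card (hf.map' W.subtype W.ker_subtype), Fintype.card_fin]

variable {α F : Type*} [Field F]

theorem exists_finrank_add_one_eq_forall_apply_eq_zero {V : Submodule F (α →₀ F)}
    [FiniteDimensional F V] {e : α →₀ F} (he : e ∈ V) {d : α} (hed : e d ≠ 0) :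
    ∃ U ≤ V, Module.finrank F U + 1 = Module.finrank F V ∧ ∀ u ∈ U, u d = 0 := by
  let φ : V →ₗ[F] F := (Finsupp.lapply d).comp V.subtype
  have hφ : Function.Surjective φ := fun c => ⟨(c * (e d)⁻¹) • ⟨e, he⟩, by simp [φ, hed]⟩
  refine ⟨(LinearMap.ker φ).map V.subtype, map_subtype_le _ _, ?_, ?_⟩
  · have := LinearMap.finrank_range_add_finrank_ker (K := F) (V := V) φ
    rw [finrank_map_subtype_eq, ← this, LinearMap.range_eq_top.mpr hφ, finrank_top,
      Module.finrank_self, add_comm]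
  · rintro _ ⟨x, hx, rfl⟩
    exact hx

theorem exists_affine_apply_eq_forall_lt_apply_eq_zero [LinearOrder α]
    {V : Submodule F (α →₀ F)} {k : ℕ} (hV : Module.finrank F V = k + 1) (a : F) :
    ∃ d, ∃ w₀ ∈ V, ∃ U ≤ V, Module.finrank F U = k ∧
      ∀ u ∈ U, (w₀ + u) d = a ∧ ∀ n, d < n → (w₀ + u) n = 0 := by
  have : FiniteDimensional F V := .of_finrank_pos (hV ▸ k.succ_pos)
  have hV0 : V ≠ ⊥ := fun h => k.succ_ne_zero (hV.symm.trans (finrank_eq_zero.mpr h))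
  obtain ⟨d, e, he, hed, htop⟩ :=
    Finsupp.exists_apply_ne_zero_forall_lt_apply_eq_zero_of_fg (Module.Finite.iff_fg.mp this) hV0
  obtain ⟨U, hUV, hU, hUd⟩ := exists_finrank_add_one_eq_forall_apply_eq_zero he hed
  refine ⟨d, (a * (e d)⁻¹) • e, V.smul_mem _ he, U, hUV, by omega,
    fun u hu => ⟨?_, fun n hn => ?_⟩⟩
  · simp [hUd u hu, hed]
  · simp [htop e he n hn, htop u (hUV hu) n hn]

end Submodule

open Finsupp in
theorem stmt19_general {F : Type*} [Field F] (k : ℕ)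
    (W : Submodule F (ℕ →₀ F)) (hdim : (k + 1 : Cardinal) ≤ Module.rank F W)
    (v : ℕ →₀ F)
    (hvW : ∀ m ∈ v.support, ∀ w ∈ W, ∀ n ∈ (w : ℕ →₀ F).support, m < n)
    (Δ : (ℕ →₀ F) → Bool)  -- `true` = blue, `false` = red
    (hv : Δ v = true)
    (hnored : ¬ ∃ w₀ ∈ W, ∃ U : Submodule F (ℕ →₀ F), U ≤ W ∧
      Module.finrank F U = k ∧ ∀ u ∈ U, Δ (v + w₀ + u) = false)
    (hend : ∀ (f g : ℕ →₀ F), f - v ∈ W → g - v ∈ W →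
      ∀ (hf : f ≠ 0) (hg : g ≠ 0),
        f (f.support.max' (Finsupp.support_nonempty_iff.mpr hf)) =
          g (g.support.max' (Finsupp.support_nonempty_iff.mpr hg)) →
        Δ f = Δ g) :
    ∀ w ∈ W, Δ (v + w) = true := by
  intro w hw
  by_contra hred
  rw [Bool.not_eq_true] at hred
  have hw0 : w ≠ 0 := by rintro rfl; simp [hv] at hred
  have hv_below : ∀ x ∈ W, ∀ d, x d ≠ 0 → ∀ n, d ≤ n → v n = 0 := fun x hx d hxd n hn =>
    notMem_support_iff.mp fun hvn => (hvW n hvn x hx d (mem_support_iff.mpr hxd)).not_ge hn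
  set m := w.support.max' (support_nonempty_iff.mpr hw0)
  have hwm : w m ≠ 0 := mem_support_iff.mp (Finset.max'_mem _ _)
  obtain ⟨hf, hf_last⟩ := exists_add_ne_zero_apply_max'_support (hv_below w hw m hwm) hwm
    fun n hn => apply_eq_zero_of_max'_support_lt hn
  obtain ⟨V, hVW, hV⟩ := W.exists_le_finrank_eq (n := k + 1) (by exact_mod_cast hdim)
  obtain ⟨d, w₀, hw₀, U, hUV, hU, hlast⟩ :=
    Submodule.exists_affine_apply_eq_forall_lt_apply_eq_zero hV (w m)
  refine hnored ⟨w₀, hVW hw₀, U, hUV.trans hVW, hU, fun u hu => ?_⟩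
  obtain ⟨hd, htop⟩ := hlast u hu
  have hxW : w₀ + u ∈ W := W.add_mem (hVW hw₀) (hVW (hUV hu))
  obtain ⟨hg, hg_last⟩ :=
    exists_add_ne_zero_apply_max'_support (hv_below _ hxW d (hd ▸ hwm)) (hd ▸ hwm) htop
  rw [add_assoc, ← hred]
  exact hend _ _ (by simpa using hxW) (by simpa using hw) hg hf
    (hg_last.trans (hd.trans hf_last.symm))

theorem stmt19 {F : Type*} [Field F] [Fintype F] (k : ℕ)
    (W : Submodule F (ℕ →₀ F)) (hdim : (k + 1 : Cardinal) ≤ Module.rank F W)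
    (v : ℕ →₀ F)
    (hvW : ∀ m ∈ v.support, ∀ w ∈ W, ∀ n ∈ (w : ℕ →₀ F).support, m < n)
    (Δ : (ℕ →₀ F) → Bool)  -- `true` = blue, `false` = red
    (hv : Δ v = true)
    (hnored : ¬ ∃ w₀ ∈ W, ∃ U : Submodule F (ℕ →₀ F), U ≤ W ∧
      Module.finrank F U = k ∧ ∀ u ∈ U, Δ (v + w₀ + u) = false)
    (hend : ∀ (f g : ℕ →₀ F), f - v ∈ W → g - v ∈ W →
      ∀ (hf : f ≠ 0) (hg : g ≠ 0),
        f (f.support.max' (Finsupp.support_nonempty_iff.mpr hf)) =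
          g (g.support.max' (Finsupp.support_nonempty_iff.mpr hg)) →
        Δ f = Δ g) :
    ∀ w ∈ W, Δ (v + w) = true :=
  stmt19_general k W hdim v hvW Δ hv hnored hend
end
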